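/- arXiv:2507.00867 — 2 statements merged into one kernel-verified Lean document; each statement's English description precedes it below -/
import Mathlib

section
/- Let p = 1 ≤ q < ∞, let v, w be weights on (a,b), and let ε > 0 be such that A_ε < ∞. Then there is a constant c, depending only on q and ε, such that (∫_a^b (∫_a^t f)^q w(t) dt)^{1/q} ≤ c · A_ε · ∫_a^b f v for every f ∈ M⁺(a,b). -/
open MeasureTheory Set Filter
open scoped ENNReal Topology

/-- The open subinterval of `ℝ` with extended-real endpoints `a` and `b`. -/
def EIoo (a b : EReal) : Set ℝ := {x : ℝ | a < (x : EReal) ∧ (x : EReal) < b}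

/-- A weight on `(a,b)`: a measurable function which is positive and finite a.e. on `(a,b)`. -/
def IsWeight (a b : EReal) (v : ℝ → ℝ≥0∞) : Prop :=
  Measurable v ∧ ∀ᵐ x ∂(volume.restrict (EIoo a b)), v x ≠ 0 ∧ v x ≠ ∞

/-- The function `V` in the case `1 < p`:  `V(t) = (∫_a^t v^{1-p'})^{1/p'}`, `p' = p/(p-1)`. -/
noncomputable def Vp (a : EReal) (p : ℝ) (v : ℝ → ℝ≥0∞) (t : ℝ) : ℝ≥0∞ :=
  (∫⁻ s in EIoo a (t : EReal), v s ^ (1 - p / (p - 1))) ^ ((p - 1) / p)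

/-- The function `V` in the case `p = 1`:  `V(t) = ess sup_{s ∈ (a,t)} 1/v(s)`. -/
noncomputable def V1 (a : EReal) (v : ℝ → ℝ≥0∞) (t : ℝ) : ℝ≥0∞ :=
  essSup (fun s => (v s)⁻¹) (volume.restrict (EIoo a (t : EReal)))

/-- `A_ε = sup_{t ∈ (a,b)} V(t)^{-ε} (∫_a^t V^{q(ε+1)} w)^{1/q}`. -/
noncomputable def Aeps (a b : EReal) (q ε : ℝ) (V w : ℝ → ℝ≥0∞) : ℝ≥0∞ :=
  ⨆ t ∈ EIoo a b,
    V t ^ (-ε) * (∫⁻ s in EIoo a (t : EReal), V s ^ (q * (ε + 1)) * w s) ^ (1 / q)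

/-- `B_{1,ε} = (∫_a^b (∫_a^t V^{q(ε+1)} w)^{r/p} V(t)^{q(ε+1)-εr} w(t) dt)^{1/r}`. -/
noncomputable def B1 (a b : EReal) (p q r ε : ℝ) (V w : ℝ → ℝ≥0∞) : ℝ≥0∞ :=
  (∫⁻ t in EIoo a b,
      (∫⁻ s in EIoo a (t : EReal), V s ^ (q * (ε + 1)) * w s) ^ (r / p) *
        (V t ^ (q * (ε + 1) - ε * r) * w t)) ^ (1 / r)

/-- The weighted Hardy inequality with constant `C`, case `p > 1`
(`RHS = C (∫_a^b f^p v)^{1/p}`). -/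
def HardyP (a b : EReal) (p q : ℝ) (v w : ℝ → ℝ≥0∞) (C : ℝ≥0∞) : Prop :=
  ∀ f : ℝ → ℝ≥0∞, Measurable f →
    (∫⁻ t in EIoo a b, (∫⁻ s in EIoo a (t : EReal), f s) ^ q * w t) ^ (1 / q)
      ≤ C * (∫⁻ x in EIoo a b, f x ^ p * v x) ^ (1 / p)

/-- The weighted Hardy inequality with constant `C`, case `p = 1`
(`RHS = C ∫_a^b f v`). -/
def Hardy1 (a b : EReal) (q : ℝ) (v w : ℝ → ℝ≥0∞) (C : ℝ≥0∞) : Prop :=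
  ∀ f : ℝ → ℝ≥0∞, Measurable f →
    (∫⁻ t in EIoo a b, (∫⁻ s in EIoo a (t : EReal), f s) ^ q * w t) ^ (1 / q)
      ≤ C * ∫⁻ x in EIoo a b, f x * v x

/-- `A_ε < ∞`, including the requirement that every subexpression (in particular
`V(t)` and the inner integral) is finite for every `t ∈ (a,b)`. -/
def AFin (a b : EReal) (q ε : ℝ) (V w : ℝ → ℝ≥0∞) : Prop :=
  (∀ t ∈ EIoo a b,
      V t ≠ ∞ ∧ (∫⁻ s in EIoo a (t : EReal), V s ^ (q * (ε + 1)) * w s) ≠ ∞) ∧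
    Aeps a b q ε V w ≠ ∞

/-- `B_{1,ε} < ∞`, including the requirement that every subexpression (in particular
`V(t)` and the inner integral) is finite for every `t ∈ (a,b)`. -/
def B1Fin (a b : EReal) (p q r ε : ℝ) (V w : ℝ → ℝ≥0∞) : Prop :=
  (∀ t ∈ EIoo a b,
      V t ≠ ∞ ∧ (∫⁻ s in EIoo a (t : EReal), V s ^ (q * (ε + 1)) * w s) ≠ ∞) ∧
    B1 a b p q r ε V w ≠ ∞


/-!
By Minkowski's integral inequality the left-hand side is at most `∫ f(s) W(s)^{1/q} ds` with
`W(s) = ∫_s^b w`, so it suffices that `W(s)^{1/q} ≤ c A_ε v(s)` for a.e. `s`. As `V` is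
nondecreasing and, for a.e. `s`, `1/v(s) ≤ V(r)` for every `r > s`, this follows from
`W(t) ≤ 2^{qε+1} A_ε^q L^{-q}` whenever `L ≤ V` on `(t,b)`. Split `(t,b)` into the blocks where
`2^j L ≤ V < 2^{j+1} L`: the `A_ε` condition bounds `∫ V^{q(ε+1)} w` over `{V < 2^{j+1} L}` by
`A_ε^q (2^{j+1} L)^{qε}`, so the `j`-th block carries `w`-mass at most
`2^{qε} A_ε^q (2^j L)^{-q}`, and these bounds sum geometrically.
-/

namespace ENNReal

lemma le_rpow_of_le_mul_rpow_one_sub_one_div {I R : ℝ≥0∞} {q : ℝ} (hq : 1 ≤ q) (hI : I ≠ ∞)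
    (h : I ≤ R * I ^ (1 - 1 / q)) : I ≤ R ^ q := by
  have hq0 : 0 < q := by linarith
  rcases eq_or_ne I 0 with rfl | hI0
  · exact bot_le
  have hroot : I ^ (1 / q) ≤ R := by
    have hexp : 0 ≤ 1 - 1 / q := by rw [sub_nonneg, div_le_one hq0]; exact hq
    rw [← ENNReal.mul_le_mul_iff_left (rpow_pos (pos_iff_ne_zero.2 hI0) hI).ne'
      (rpow_ne_top_of_nonneg hexp hI), ← rpow_add _ _ hI0 hI, add_sub_cancel, rpow_one]
    exact h
  calc I = (I ^ (1 / q)) ^ q := by rw [← rpow_mul, one_div_mul_cancel hq0.ne', rpow_one]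
    _ ≤ R ^ q := rpow_le_rpow hroot hq0.le

lemma exists_two_pow_mul_le_lt {L x : ℝ≥0∞} (hL : L ≠ 0) (hx : x ≠ ∞) (hLx : L ≤ x) :
    ∃ j : ℕ, 2 ^ j * L ≤ x ∧ x < 2 ^ (j + 1) * L := by
  have hL' : L ≠ ∞ := ne_top_of_le_ne_top hx hLx
  have hone : 1 ≤ (x / L).toNNReal := by
    rw [← ENNReal.coe_le_coe, coe_toNNReal (div_ne_top hx hL), coe_one,
      ENNReal.le_div_iff_mul_le (Or.inl hL) (Or.inl hL'), one_mul]
    exact hLx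
  obtain ⟨j, hj, hj'⟩ := exists_nat_pow_near hone (by norm_num : (1 : NNReal) < 2)
  refine ⟨j, ?_, ?_⟩
  · rw [← ENNReal.le_div_iff_mul_le (Or.inl hL) (Or.inl hL'), ← coe_toNNReal (div_ne_top hx hL)]
    exact_mod_cast hj
  · rw [← ENNReal.div_lt_iff (Or.inl hL) (Or.inl hL'), ← coe_toNNReal (div_ne_top hx hL)]
    exact_mod_cast hj'

lemma tsum_inv_two_rpow_pow_le {q : ℝ} (hq : 1 ≤ q) : ∑' j : ℕ, ((2 : ℝ≥0∞) ^ q)⁻¹ ^ j ≤ 2 := by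
  have hr : ((2 : ℝ≥0∞) ^ q)⁻¹ ≤ 2⁻¹ := ENNReal.inv_le_inv.2 (by
    simpa using ENNReal.rpow_le_rpow_of_exponent_le (x := 2) one_le_two hq)
  calc ∑' j : ℕ, ((2 : ℝ≥0∞) ^ q)⁻¹ ^ j = (1 - ((2 : ℝ≥0∞) ^ q)⁻¹)⁻¹ := tsum_geometric _
    _ ≤ (1 - 2⁻¹)⁻¹ := by gcongr
    _ = 2 := by rw [one_sub_inv_two, inv_inv]

end ENNReal

section Minkowski

variable {α β : Type*} [MeasurableSpace α] [MeasurableSpace β] {q : ℝ}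

lemma lintegral_rpow_sub_one_mul_le (μ : Measure α) (hq : 1 ≤ q) {g h : α → ℝ≥0∞}
    (hg : AEMeasurable g μ) (hh : AEMeasurable h μ) :
    ∫⁻ x, g x ^ (q - 1) * h x ∂μ ≤
      (∫⁻ x, h x ^ q ∂μ) ^ (1 / q) * (∫⁻ x, g x ^ q ∂μ) ^ (1 - 1 / q) := by
  rcases hq.eq_or_lt with rfl | hq1
  · simp
  have hconj := Real.HolderConjugate.conjExponent hq1
  calc ∫⁻ x, g x ^ (q - 1) * h x ∂μ = ∫⁻ x, (h * fun x ↦ g x ^ (q - 1)) x ∂μ := by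
        simp only [Pi.mul_apply, mul_comm]
    _ ≤ _ := ENNReal.lintegral_mul_le_Lp_mul_Lq μ hconj hh (hg.pow_const _)
    _ = _ := by
      congr 2
      · simp only [← ENNReal.rpow_mul, hconj.sub_one_mul_conj]
      · rw [Real.conjExponent, one_div_div]
        field_simp

variable {μ : Measure α} {ν : Measure β} {F : α → β → ℝ≥0∞}

lemma tendsto_lintegral_min_natCast_rpow {Φ : α → ℝ≥0∞} (hΦ : Measurable Φ) (hq : 0 ≤ q) :
    Tendsto (fun n : ℕ ↦ ∫⁻ x, min (Φ x) n ^ q ∂μ) atTop (𝓝 (∫⁻ x, Φ x ^ q ∂μ)) := by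
  have hmono : ∀ x, Monotone fun n : ℕ ↦ min (Φ x) n := fun x n n' h ↦
    min_le_min le_rfl (by exact_mod_cast h)
  refine lintegral_tendsto_of_tendsto_of_monotone
    (fun n ↦ ((hΦ.min measurable_const).pow_const q).aemeasurable)
    (ae_of_all _ fun x n n' h ↦ ENNReal.rpow_le_rpow (hmono x h) hq)
    (ae_of_all _ fun x ↦ (ENNReal.continuous_rpow_const.tendsto _).comp ?_)
  have hsup : ⨆ n : ℕ, min (Φ x) n = Φ x := by
    rw [← inf_iSup_eq, ENNReal.iSup_natCast, inf_top_eq]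
  simpa only [hsup] using tendsto_atTop_iSup (hmono x)

theorem lintegral_lintegral_rpow_le_of_isFiniteMeasure [IsFiniteMeasure μ] [SFinite ν]
    (hq : 1 ≤ q) (hF : Measurable (Function.uncurry F)) :
    ∫⁻ x, (∫⁻ y, F x y ∂ν) ^ q ∂μ ≤ (∫⁻ y, (∫⁻ x, F x y ^ q ∂μ) ^ (1 / q) ∂ν) ^ q := by
  have hq0 : 0 < q := by linarith
  set Φ : α → ℝ≥0∞ := fun x ↦ ∫⁻ y, F x y ∂ν
  have hΦ : Measurable Φ := hF.lintegral_prod_right'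
  set R := ∫⁻ y, (∫⁻ x, F x y ^ q ∂μ) ^ (1 / q) ∂ν
  set m : ℕ → α → ℝ≥0∞ := fun n x ↦ min (Φ x) n
  have hm : ∀ n, Measurable (m n) := fun n ↦ hΦ.min measurable_const
  set I : ℕ → ℝ≥0∞ := fun n ↦ ∫⁻ x, m n x ^ q ∂μ
  have hI_ne_top : ∀ n, I n ≠ ∞ := fun n ↦ by
    refine ne_top_of_le_ne_top ?_ (lintegral_mono fun x ↦
      ENNReal.rpow_le_rpow (min_le_right (Φ x) (n : ℝ≥0∞)) hq0.le)
    simp [lintegral_const, ENNReal.mul_eq_top, ENNReal.rpow_eq_top_iff, measure_ne_top, hq0.not_gt]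
  -- Truncating `Φ` makes `I n` finite, so that the factor `I n ^ (1 - 1 / q)` can be absorbed.
  have hI_le : ∀ n, I n ≤ R * I n ^ (1 - 1 / q) := fun n ↦ calc
    I n ≤ ∫⁻ x, m n x ^ (q - 1) * Φ x ∂μ := lintegral_mono fun x ↦ by
        conv_lhs => rw [← sub_add_cancel q 1,
          ENNReal.rpow_add_of_nonneg _ _ (by linarith) zero_le_one, ENNReal.rpow_one]
        gcongr
        exact min_le_left _ _
    _ = ∫⁻ x, ∫⁻ y, m n x ^ (q - 1) * F x y ∂ν ∂μ := lintegral_congr fun x ↦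
        (lintegral_const_mul _ (hF.comp measurable_prodMk_left)).symm
    _ = ∫⁻ y, ∫⁻ x, m n x ^ (q - 1) * F x y ∂μ ∂ν :=
        lintegral_lintegral_swap ((((hm n).pow_const _).comp measurable_fst).mul hF).aemeasurable
    _ ≤ ∫⁻ y, (∫⁻ x, F x y ^ q ∂μ) ^ (1 / q) * I n ^ (1 - 1 / q) ∂ν := lintegral_mono fun y ↦
        lintegral_rpow_sub_one_mul_le μ hq (hm n).aemeasurable
          (hF.comp measurable_prodMk_right).aemeasurable
    _ = R * I n ^ (1 - 1 / q) := lintegral_mul_const' _ _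
        (ENNReal.rpow_ne_top_of_nonneg (by rw [sub_nonneg, div_le_one hq0]; exact hq)
          (hI_ne_top n))
  exact le_of_tendsto' (tendsto_lintegral_min_natCast_rpow hΦ hq0.le) fun n ↦
    ENNReal.le_rpow_of_le_mul_rpow_one_sub_one_div hq (hI_ne_top n) (hI_le n)

/-- **Minkowski's integral inequality**. -/
theorem lintegral_lintegral_rpow_le [SFinite μ] [SFinite ν] (hq : 1 ≤ q)
    (hF : Measurable (Function.uncurry F)) :
    (∫⁻ x, (∫⁻ y, F x y ∂ν) ^ q ∂μ) ^ (1 / q) ≤ ∫⁻ y, (∫⁻ x, F x y ^ q ∂μ) ^ (1 / q) ∂ν := by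
  have hq0 : 0 < q := by linarith
  set μN : ℕ → Measure α := fun N ↦ ∑ i ∈ Finset.range N, sfiniteSeq μ i
  have hμN : ∀ g : α → ℝ≥0∞, ∫⁻ x, g x ∂μ = ⨆ N, ∫⁻ x, g x ∂μN N := fun g ↦ by
    conv_lhs => rw [← sum_sfiniteSeq μ]
    simp only [lintegral_sum_measure, ENNReal.tsum_eq_iSup_nat, μN, lintegral_finsetSum_measure]
  have hle : ∫⁻ x, (∫⁻ y, F x y ∂ν) ^ q ∂μ ≤ (∫⁻ y, (∫⁻ x, F x y ^ q ∂μ) ^ (1 / q) ∂ν) ^ q := by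
    rw [hμN]
    refine iSup_le fun N ↦ (lintegral_lintegral_rpow_le_of_isFiniteMeasure hq hF).trans ?_
    refine ENNReal.rpow_le_rpow (lintegral_mono fun y ↦ ?_) hq0.le
    refine ENNReal.rpow_le_rpow ?_ (by positivity)
    rw [hμN]
    exact le_iSup (fun N ↦ ∫⁻ x, F x y ^ q ∂μN N) N
  calc (∫⁻ x, (∫⁻ y, F x y ∂ν) ^ q ∂μ) ^ (1 / q)
      ≤ ((∫⁻ y, (∫⁻ x, F x y ^ q ∂μ) ^ (1 / q) ∂ν) ^ q) ^ (1 / q) := by gcongr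
    _ = _ := by rw [← ENNReal.rpow_mul, mul_one_div_cancel hq0.ne', ENNReal.rpow_one]

end Minkowski

lemma measurableSet_EIoo (a b : EReal) : MeasurableSet (EIoo a b) :=
  measurable_coe_real_ereal measurableSet_Ioo

section EIoo

variable {a b : EReal}

lemma EIoo_subset_EIoo_right {t t' : EReal} (h : t ≤ t') : EIoo a t ⊆ EIoo a t' :=
  fun _ hx ↦ ⟨hx.1, hx.2.trans_le h⟩

lemma EIoo_eq_inter_Iio {t : ℝ} (ht : (t : EReal) ≤ b) : EIoo a t = EIoo a b ∩ Iio t := by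
  ext x
  exact ⟨fun h ↦ ⟨⟨h.1, h.2.trans_le ht⟩, EReal.coe_lt_coe_iff.1 h.2⟩,
    fun h ↦ ⟨h.1.1, EReal.coe_lt_coe_iff.2 h.2⟩⟩

lemma EIoo_eq_inter_Ioi {t : ℝ} (ht : a ≤ t) : EIoo t b = EIoo a b ∩ Ioi t := by
  ext x
  exact ⟨fun h ↦ ⟨⟨ht.trans_lt h.1, h.2⟩, EReal.coe_lt_coe_iff.1 h.1⟩,
    fun h ↦ ⟨EReal.coe_lt_coe_iff.2 h.2, h.1.2⟩⟩

lemma volume_EIoo_ne_zero {t : EReal} (h : a < t) : volume (EIoo a t) ≠ 0 := by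
  obtain ⟨x, hax, hxt⟩ := EReal.lt_iff_exists_real_btwn.1 h
  exact ((continuous_coe_real_ereal.isOpen_preimage _ isOpen_Ioo).measure_pos volume
    ⟨x, hax, hxt⟩).ne'

/-- The sets `EIoo a r`, `r ∈ S` rational, exhaust `S` up to its maximum (if any), which has no
mass. -/
lemma measure_le_of_forall_EIoo_le {μ : Measure ℝ} [NullSingletonClass μ] {S : Set ℝ}
    {D : ℝ≥0∞} (hSa : ∀ x ∈ S, a < x) (hS : ∀ x ∈ S, ∀ y : ℝ, a < y → y < x → y ∈ S)
    (hD : ∀ u ∈ S, μ (EIoo a u) ≤ D) : μ S ≤ D := by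
  set T := ⋃ r ∈ {r : ℚ | (r : ℝ) ∈ S}, EIoo a (r : ℝ)
  set Z := {x ∈ S | ∀ y ∈ S, y ≤ x}
  have hT : μ T ≤ D := by
    refine (measure_biUnion_eq_iSup (Set.to_countable _) fun r hr r' hr' ↦ ?_).trans_le
      (iSup₂_le fun r hr ↦ hD _ hr)
    rcases le_total r r' with h | h
    · exact ⟨r', hr', EIoo_subset_EIoo_right (by exact_mod_cast h), subset_rfl⟩
    · exact ⟨r, hr, subset_rfl, EIoo_subset_EIoo_right (by exact_mod_cast h)⟩
  have hZ : μ Z = 0 :=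
    Set.Subsingleton.measure_zero (fun x hx y hy ↦ le_antisymm (hy.2 x hx.1) (hx.2 y hy.1)) μ
  have hcov : S ⊆ T ∪ Z := by
    intro x hx
    by_cases hxZ : x ∈ Z
    · exact Or.inr hxZ
    obtain ⟨y, hy, hxy⟩ : ∃ y ∈ S, x < y := by simpa [Z, hx] using hxZ
    obtain ⟨r, hxr, hry⟩ := exists_rat_btwn hxy
    refine Or.inl (mem_biUnion (x := r) ?_ ⟨hSa x hx, EReal.coe_lt_coe_iff.2 hxr⟩)
    exact hS y hy r ((hSa x hx).trans (EReal.coe_lt_coe_iff.2 hxr)) hry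
  calc μ S ≤ μ T + μ Z := (measure_mono hcov).trans (measure_union_le _ _)
    _ ≤ D := by rw [hZ, add_zero]; exact hT

end EIoo

lemma V1_mono (a : EReal) (v : ℝ → ℝ≥0∞) : Monotone (V1 a v) := fun _ _ h ↦
  essSup_mono_measure' (Measure.restrict_mono (EIoo_subset_EIoo_right (by exact_mod_cast h)) le_rfl)

lemma V1_ne_zero {a b : EReal} {v : ℝ → ℝ≥0∞} (hv : IsWeight a b v) {t : ℝ}
    (ht : t ∈ EIoo a b) : V1 a v t ≠ 0 := by
  intro h0
  have hv_inv : ∀ᵐ s ∂volume.restrict (EIoo a t), (v s)⁻¹ = 0 :=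
    ENNReal.essSup_eq_zero_iff.1 h0
  have hv_fin : ∀ᵐ s ∂volume.restrict (EIoo a t), v s ≠ ∞ :=
    (ae_restrict_of_ae_restrict_of_subset (EIoo_subset_EIoo_right ht.2.le) hv.2).mono
      fun _ h ↦ h.2
  have := ae_neBot.2 (Measure.restrict_eq_zero.not.2 (volume_EIoo_ne_zero ht.1))
  obtain ⟨s, hs0, hs⟩ := (hv_inv.and hv_fin).exists
  exact hs (ENNReal.inv_eq_zero.1 hs0)

lemma ae_inv_le_V1 (a : EReal) (v : ℝ → ℝ≥0∞) :
    ∀ᵐ s : ℝ, a < s → ∀ r : ℝ, s < r → (v s)⁻¹ ≤ V1 a v r := by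
  have h : ∀ r : ℚ, ∀ᵐ s, s ∈ EIoo a (r : ℝ) → (v s)⁻¹ ≤ V1 a v r := fun r ↦
    ae_imp_of_ae_restrict (ENNReal.ae_le_essSup _)
  filter_upwards [ae_all_iff.2 h] with s hs has r hsr
  obtain ⟨r', hsr', hr'r⟩ := exists_rat_btwn hsr
  exact (hs r' ⟨has, EReal.coe_lt_coe_iff.2 hsr'⟩).trans (V1_mono a v hr'r.le)

section Hardy

variable {a b : EReal} {q : ℝ} {f w : ℝ → ℝ≥0∞}

theorem lintegral_hardy_rpow_le (hq : 1 ≤ q) (hf : Measurable f) (hw : Measurable w) :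
    (∫⁻ t in EIoo a b, (∫⁻ s in EIoo a (t : EReal), f s) ^ q * w t) ^ (1 / q) ≤
      ∫⁻ s in EIoo a b, f s * (∫⁻ u in EIoo (s : EReal) b, w u) ^ (1 / q) := by
  have hq0 : 0 < q := by linarith
  have hE := measurableSet_EIoo a b
  set F : ℝ → ℝ → ℝ≥0∞ := fun t s ↦ if s < t then f s else 0
  have hF : Measurable (Function.uncurry F) :=
    Measurable.ite (measurableSet_lt measurable_snd measurable_fst) (hf.comp measurable_snd)
      measurable_const
  have hF_inner : ∀ t ∈ EIoo a b, ∫⁻ s in EIoo a b, F t s = ∫⁻ s in EIoo a t, f s := by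
    intro t ht
    rw [EIoo_eq_inter_Iio ht.2.le, inter_comm, ← Measure.restrict_restrict measurableSet_Iio,
      ← lintegral_indicator measurableSet_Iio]
    rfl
  have hF_outer : ∀ s ∈ EIoo a b, ∫⁻ t in EIoo a b, w t * F t s ^ q =
      f s ^ q * ∫⁻ u in EIoo (s : EReal) b, w u := by
    intro s hs
    rw [EIoo_eq_inter_Ioi hs.1.le, inter_comm, ← Measure.restrict_restrict measurableSet_Ioi,
      ← lintegral_const_mul _ hw, ← lintegral_indicator measurableSet_Ioi]
    refine lintegral_congr fun t ↦ ?_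
    by_cases hst : s < t
    · simp [F, hst, mul_comm]
    · simp [F, hst, hq0]
  calc (∫⁻ t in EIoo a b, (∫⁻ s in EIoo a t, f s) ^ q * w t) ^ (1 / q)
      = (∫⁻ t, (∫⁻ s, F t s ∂volume.restrict (EIoo a b)) ^ q
          ∂(volume.restrict (EIoo a b)).withDensity w) ^ (1 / q) := by
        rw [lintegral_withDensity_eq_lintegral_mul _ hw
          (g := fun t ↦ (∫⁻ s in EIoo a b, F t s) ^ q) (hF.lintegral_prod_right'.pow_const q)]
        congr 1
        refine setLIntegral_congr_fun hE fun t ht ↦ ?_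
        rw [Pi.mul_apply, hF_inner t ht, mul_comm]
    _ ≤ ∫⁻ s in EIoo a b, (∫⁻ t, F t s ^ q ∂(volume.restrict (EIoo a b)).withDensity w) ^ (1 / q) :=
        lintegral_lintegral_rpow_le hq hF
    _ = ∫⁻ s in EIoo a b, f s * (∫⁻ u in EIoo s b, w u) ^ (1 / q) := by
        refine setLIntegral_congr_fun hE fun s hs ↦ ?_
        rw [lintegral_withDensity_eq_lintegral_mul _ hw (g := fun t ↦ F t s ^ q)
          ((hF.comp measurable_prodMk_right).pow_const q)]
        simp only [Pi.mul_apply]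
        rw [hF_outer s hs, ENNReal.mul_rpow_of_nonneg _ _ (by positivity), ← ENNReal.rpow_mul,
          mul_one_div_cancel hq0.ne', ENNReal.rpow_one]

end Hardy

section Tail

variable {a b : EReal} {q ε : ℝ} {V w : ℝ → ℝ≥0∞} {K : ℝ≥0∞}

lemma lintegral_rpow_mul_le_Aeps_rpow_mul (hq : 0 < q) {u : ℝ} (hu : u ∈ EIoo a b)
    (hVu0 : V u ≠ 0) (hVu : V u ≠ ∞) :
    ∫⁻ s in EIoo a u, V s ^ (q * (ε + 1)) * w s ≤ Aeps a b q ε V w ^ q * V u ^ (q * ε) := by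
  set G := ∫⁻ s in EIoo a u, V s ^ (q * (ε + 1)) * w s
  have hA : V u ^ (-ε) * G ^ (1 / q) ≤ Aeps a b q ε V w :=
    le_iSup₂ (f := fun t (_ : t ∈ EIoo a b) ↦
      V t ^ (-ε) * (∫⁻ s in EIoo a t, V s ^ (q * (ε + 1)) * w s) ^ (1 / q)) u hu
  have hroot : G ^ (1 / q) ≤ V u ^ ε * Aeps a b q ε V w := calc
    G ^ (1 / q) = V u ^ ε * (V u ^ (-ε) * G ^ (1 / q)) := by
      rw [← mul_assoc, ← ENNReal.rpow_add _ _ hVu0 hVu, add_neg_cancel, ENNReal.rpow_zero,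
        one_mul]
    _ ≤ V u ^ ε * Aeps a b q ε V w := by gcongr
  calc G = (G ^ (1 / q)) ^ q := by
        rw [← ENNReal.rpow_mul, one_div_mul_cancel hq.ne', ENNReal.rpow_one]
    _ ≤ (V u ^ ε * Aeps a b q ε V w) ^ q := by gcongr
    _ = Aeps a b q ε V w ^ q * V u ^ (q * ε) := by
        rw [ENNReal.mul_rpow_of_nonneg _ _ hq.le, ← ENNReal.rpow_mul, mul_comm ε q, mul_comm]

lemma lintegral_preimage_Ico_le (hV : Monotone V)
    (hG : ∀ u ∈ EIoo a b, ∫⁻ s in EIoo a u, V s ^ (q * (ε + 1)) * w s ≤ K * V u ^ (q * ε))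
    (hq : 0 < q) (hε : 0 ≤ ε) {t : ℝ} (ht : a ≤ t) {c : ℝ≥0∞}
    (hc0 : c ≠ 0) (hc : c ≠ ∞) :
    ∫⁻ s in EIoo t b ∩ V ⁻¹' Ico c (2 * c), w s ≤ 2 ^ (q * ε) * K / c ^ q := by
  set I := EIoo t b ∩ V ⁻¹' Ico c (2 * c)
  have hI : MeasurableSet I := (measurableSet_EIoo _ _).inter (hV.measurable measurableSet_Ico)
  have hS : ∫⁻ s in {s ∈ EIoo a b | V s < 2 * c}, V s ^ (q * (ε + 1)) * w s ≤
      K * (2 * c) ^ (q * ε) := by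
    rw [← withDensity_apply']
    refine measure_le_of_forall_EIoo_le (fun x hx ↦ hx.1.1)
      (fun x hx y hay hyx ↦ ⟨⟨hay, (EReal.coe_lt_coe_iff.2 hyx).trans hx.1.2⟩,
        (hV hyx.le).trans_lt hx.2⟩) fun u hu ↦ ?_
    rw [withDensity_apply']
    exact (hG u hu.1).trans (by gcongr; exact hu.2.le)
  have hcq : c ^ (q * (ε + 1)) = c ^ q * c ^ (q * ε) := by
    rw [mul_add, mul_one, add_comm, ENNReal.rpow_add_of_nonneg _ _ hq.le (by positivity)]
  have key : c ^ (q * ε) * (c ^ q * ∫⁻ s in I, w s) ≤ c ^ (q * ε) * (2 ^ (q * ε) * K) := calc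
    c ^ (q * ε) * (c ^ q * ∫⁻ s in I, w s) = ∫⁻ s in I, c ^ (q * (ε + 1)) * w s := by
      rw [lintegral_const_mul' _ _ (ENNReal.rpow_ne_top_of_nonneg (by positivity) hc), hcq]
      ring
    _ ≤ ∫⁻ s in I, V s ^ (q * (ε + 1)) * w s :=
      setLIntegral_mono' hI fun s hs ↦ by gcongr; exact hs.2.1
    _ ≤ ∫⁻ s in {s ∈ EIoo a b | V s < 2 * c}, V s ^ (q * (ε + 1)) * w s :=
      lintegral_mono_set fun s hs ↦ ⟨⟨ht.trans_lt hs.1.1, hs.1.2⟩, hs.2.2⟩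
    _ ≤ K * (2 * c) ^ (q * ε) := hS
    _ = c ^ (q * ε) * (2 ^ (q * ε) * K) := by
      rw [ENNReal.mul_rpow_of_nonneg _ _ (by positivity)]; ring
  rw [ENNReal.mul_le_mul_iff_right (ENNReal.rpow_pos (pos_iff_ne_zero.2 hc0) hc).ne'
    (ENNReal.rpow_ne_top_of_nonneg (by positivity) hc)] at key
  rw [ENNReal.le_div_iff_mul_le (Or.inl (ENNReal.rpow_pos (pos_iff_ne_zero.2 hc0) hc).ne')
    (Or.inl (ENNReal.rpow_ne_top_of_nonneg hq.le hc)), mul_comm]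
  exact key

lemma lintegral_EIoo_le_div_rpow (hV : Monotone V)
    (hG : ∀ u ∈ EIoo a b, ∫⁻ s in EIoo a u, V s ^ (q * (ε + 1)) * w s ≤ K * V u ^ (q * ε))
    (hq : 1 ≤ q) (hε : 0 ≤ ε) (hVfin : ∀ u ∈ EIoo a b, V u ≠ ∞) {t : ℝ} (ht : a ≤ t)
    {L : ℝ≥0∞} (hL0 : L ≠ 0) (hL : L ≠ ∞) (hLV : ∀ s ∈ EIoo t b, L ≤ V s) :
    ∫⁻ s in EIoo t b, w s ≤ 2 ^ (q * ε + 1) * K / L ^ q := by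
  have hq0 : 0 < q := by linarith
  set r : ℝ≥0∞ := (2 ^ q)⁻¹
  have hcov : EIoo t b ⊆ ⋃ j : ℕ, EIoo t b ∩ V ⁻¹' Ico (2 ^ j * L) (2 * (2 ^ j * L)) := by
    intro s hs
    obtain ⟨j, hj, hj'⟩ := ENNReal.exists_two_pow_mul_le_lt hL0
      (hVfin s ⟨ht.trans_lt hs.1, hs.2⟩) (hLV s hs)
    exact mem_iUnion.2 ⟨j, hs, hj, by rwa [← mul_assoc, ← pow_succ']⟩
  have hblock : ∀ j : ℕ, 2 ^ (q * ε) * K / (2 ^ j * L) ^ q = 2 ^ (q * ε) * K / L ^ q * r ^ j := by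
    intro j
    have hpow : ((2 : ℝ≥0∞) ^ j) ^ q = (2 ^ q) ^ j := by
      rw [← ENNReal.rpow_natCast, ← ENNReal.rpow_mul, mul_comm, ENNReal.rpow_mul,
        ENNReal.rpow_natCast]
    rw [ENNReal.mul_rpow_of_nonneg _ _ hq0.le, hpow, div_eq_mul_inv, div_eq_mul_inv,
      ENNReal.mul_inv (Or.inl (pow_ne_zero _ (ENNReal.rpow_pos two_pos ENNReal.ofNat_ne_top).ne'))
        (Or.inl (ENNReal.pow_ne_top (ENNReal.rpow_ne_top_of_nonneg hq0.le ENNReal.ofNat_ne_top))),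
      ENNReal.inv_pow]
    ring
  calc ∫⁻ s in EIoo t b, w s
      ≤ ∑' j : ℕ, ∫⁻ s in EIoo t b ∩ V ⁻¹' Ico (2 ^ j * L) (2 * (2 ^ j * L)), w s :=
        (lintegral_mono_set hcov).trans (lintegral_iUnion_le _ _)
    _ ≤ ∑' j : ℕ, 2 ^ (q * ε) * K / L ^ q * r ^ j := ENNReal.tsum_le_tsum fun j ↦
        (lintegral_preimage_Ico_le hV hG hq0 hε ht
          (mul_ne_zero (pow_ne_zero _ two_ne_zero) hL0)
          (ENNReal.mul_ne_top (ENNReal.pow_ne_top ENNReal.ofNat_ne_top) hL)).trans_eq (hblock j)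
    _ = 2 ^ (q * ε) * K / L ^ q * ∑' j : ℕ, r ^ j := ENNReal.tsum_mul_left
    _ ≤ 2 ^ (q * ε) * K / L ^ q * 2 := by gcongr; exact ENNReal.tsum_inv_two_rpow_pow_le hq
    _ = 2 ^ (q * ε + 1) * K / L ^ q := by
        rw [ENNReal.rpow_add _ _ two_ne_zero ENNReal.ofNat_ne_top, ENNReal.rpow_one,
          div_eq_mul_inv, div_eq_mul_inv]
        ring

lemma ae_rpow_lintegral_EIoo_le {v : ℝ → ℝ≥0∞} (hq : 1 ≤ q) (hε : 0 ≤ ε) (hv : IsWeight a b v)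
    (hA : AFin a b q ε (V1 a v) w) :
    ∀ᵐ s : ℝ ∂volume.restrict (EIoo a b), (∫⁻ u in EIoo (s : EReal) b, w u) ^ (1 / q) ≤
      (2 ^ (q * ε + 1)) ^ (1 / q) * Aeps a b q ε (V1 a v) w * v s := by
  have hq0 : 0 < q := by linarith
  have hG : ∀ u ∈ EIoo a b, ∫⁻ s in EIoo a u, V1 a v s ^ (q * (ε + 1)) * w s ≤
      Aeps a b q ε (V1 a v) w ^ q * V1 a v u ^ (q * ε) := fun u hu ↦
    lintegral_rpow_mul_le_Aeps_rpow_mul hq0 hu (V1_ne_zero hv hu) (hA.1 u hu).1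
  filter_upwards [ae_restrict_of_ae (ae_inv_le_V1 a v), hv.2,
    ae_restrict_mem (measurableSet_EIoo a b)] with s hVs hvs hs
  have h := lintegral_EIoo_le_div_rpow (V1_mono a v) hG hq hε (fun u hu ↦ (hA.1 u hu).1)
    hs.1.le (ENNReal.inv_ne_zero.2 hvs.2) (ENNReal.inv_ne_top.2 hvs.1)
    fun r hr ↦ hVs hs.1 r (EReal.coe_lt_coe_iff.1 hr.1)
  rw [ENNReal.inv_rpow, div_eq_mul_inv, inv_inv] at h
  calc (∫⁻ u in EIoo s b, w u) ^ (1 / q)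
      ≤ (2 ^ (q * ε + 1) * Aeps a b q ε (V1 a v) w ^ q * v s ^ q) ^ (1 / q) := by gcongr
    _ = (2 ^ (q * ε + 1)) ^ (1 / q) * Aeps a b q ε (V1 a v) w * v s := by
      rw [ENNReal.mul_rpow_of_nonneg _ _ (by positivity),
        ENNReal.mul_rpow_of_nonneg _ _ (by positivity), one_div,
        ENNReal.rpow_rpow_inv hq0.ne', ENNReal.rpow_rpow_inv hq0.ne']

end Tail

/-- sufficiency in the convex case `p = 1 ≤ q < ∞`: if `A_ε < ∞`, then
the Hardy inequality holds with constant `c · A_ε`, `c` depending only on `q, ε`. -/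
theorem stmt3 (q ε : ℝ) (hq : 1 ≤ q) (hε : 0 < ε) :
    ∃ c : ℝ≥0∞, 0 < c ∧ c ≠ ∞ ∧
      ∀ (a b : EReal), a < b →
        ∀ v w : ℝ → ℝ≥0∞, IsWeight a b v → IsWeight a b w →
          AFin a b q ε (V1 a v) w →
            ∀ f : ℝ → ℝ≥0∞, Measurable f →
              (∫⁻ t in EIoo a b, (∫⁻ s in EIoo a (t : EReal), f s) ^ q * w t) ^ (1 / q)
                ≤ c * Aeps a b q ε (V1 a v) w * ∫⁻ x in EIoo a b, f x * v x := by
  set c : ℝ≥0∞ := (2 ^ (q * ε + 1)) ^ (1 / q)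
  refine ⟨c, ENNReal.rpow_pos (by positivity) (by simp),
    ENNReal.rpow_ne_top_of_nonneg (by positivity) (by simp), ?_⟩
  intro a b _ v w hv hw hA f hf
  calc (∫⁻ t in EIoo a b, (∫⁻ s in EIoo a t, f s) ^ q * w t) ^ (1 / q)
      ≤ ∫⁻ s in EIoo a b, f s * (∫⁻ u in EIoo s b, w u) ^ (1 / q) :=
        lintegral_hardy_rpow_le hq hf hw.1
    _ ≤ ∫⁻ s in EIoo a b, c * Aeps a b q ε (V1 a v) w * (f s * v s) := by
        refine lintegral_mono_ae ((ae_rpow_lintegral_EIoo_le hq hε.le hv hA).mono fun s hs ↦ ?_)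
        exact (mul_le_mul_right hs (f s)).trans_eq (by ring)
    _ = c * Aeps a b q ε (V1 a v) w * ∫⁻ s in EIoo a b, f s * v s :=
        lintegral_const_mul' _ _ (ENNReal.mul_ne_top
          (ENNReal.rpow_ne_top_of_nonneg (by positivity) (by simp)) hA.2)
end

section
/- Let 1 < p < ∞ and 0 < q < ∞, let v, w be weights on (a,b) with ∫_a^b v^{1−p'} < ∞, and suppose that C > 0 is such that (∫_a^b (∫_a^t f)^q w(t) dt)^{1/q} ≤ C (∫_a^b f^p v)^{1/p} holds for all f ∈ M⁺(a,b). Then (∫_a^b V(x)^{q p'} w(x) dx)^{1/q} ≤ C · V(b)^{p'/p}, where V(b) = (∫_a^b v^{1−p'})^{1/p'}. -/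
open MeasureTheory Set Filter
open scoped ENNReal Topology

/-- if `∫_a^b v^{1-p'} < ∞` and the Hardy inequality holds with constant
`C`, then `(∫_a^b V^{qp'} w)^{1/q} ≤ C · V(b)^{p'/p}` where `V(b) = (∫_a^b v^{1-p'})^{1/p'}`. -/
theorem stmt16 (p q : ℝ) (hp : 1 < p) (hq : 0 < q)
    (a b : EReal) (hab : a < b) (v w : ℝ → ℝ≥0∞) (hv : IsWeight a b v) (hw : IsWeight a b w)
    (hvfin : (∫⁻ x in EIoo a b, v x ^ (1 - p / (p - 1))) ≠ ∞)
    (C : ℝ≥0∞) (hC0 : 0 < C) (hC : C ≠ ∞) (hHardy : HardyP a b p q v w C) :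
    (∫⁻ x in EIoo a b, Vp a p v x ^ (q * (p / (p - 1))) * w x) ^ (1 / q)
      ≤ C * ((∫⁻ x in EIoo a b, v x ^ (1 - p / (p - 1))) ^ ((p - 1) / p))
              ^ ((p / (p - 1)) / p) := by
  have hp0 : p ≠ 0 := by linarith
  have hp1 : p - 1 ≠ 0 := by linarith
  set f : ℝ → ℝ≥0∞ := fun x => v x ^ (1 - p / (p - 1)) with hf
  have hfm : Measurable f := hv.1.pow_const _
  have key := hHardy f hfm
  have hL : ∀ t : ℝ,
      (∫⁻ s in EIoo a (t : EReal), f s) ^ q = Vp a p v t ^ (q * (p / (p - 1))) := by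
    intro t
    rw [Vp, ← ENNReal.rpow_mul]
    congr 1
    field_simp
  have hR : (∫⁻ x in EIoo a b, f x ^ p * v x)
      = ∫⁻ x in EIoo a b, v x ^ (1 - p / (p - 1)) := by
    refine lintegral_congr_ae ?_
    filter_upwards [hv.2] with x hx
    rw [hf]
    simp only
    rw [← ENNReal.rpow_mul]
    nth_rewrite 2 [← ENNReal.rpow_one (v x)]
    rw [← ENNReal.rpow_add _ _ hx.1 hx.2]
    congr 1
    field_simp
    ring
  simp only [hL, hR] at key
  refine key.trans_eq ?_
  rw [← ENNReal.rpow_mul]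
  congr 2
  field_simp
end
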